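/- arXiv:1907.02708 — 4 statements merged into one kernel-verified Lean document; each statement's English description precedes it below -/
import Mathlib

section
/- Let $m_0 \in \mathbb{N}$ and let $(\beta_n)_{n \ge m_0}$ be a sequence in $[0,1]$, and let $\beta \in (0,1)$ such that for each $n \ge m_0$: if $\beta_n > \beta$ then $\beta_{n+1} = \frac{n}{n+1}\beta_n$, and if $\beta_n \le \beta$ then $\beta_{n+1} \le \beta_n + \frac{1}{n+1}$. Let $\widetilde{\beta} > \beta$ and set $m_1 = \lceil 1/\beta \rceil \cdot \max\{m_0, \lceil 1/(\widetilde{\beta}-\beta) \rceil\}$. Then $\beta_n \le \widetilde{\beta}$ for all $n \ge m_1$. -/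
theorem stmt0 (m0 : ℕ) (hm0 : 0 < m0) (β : ℕ → ℝ)
    (hβ01 : ∀ n, m0 ≤ n → β n ∈ Set.Icc (0:ℝ) 1)
    (b : ℝ) (hb : b ∈ Set.Ioo (0:ℝ) 1)
    (h1 : ∀ n, m0 ≤ n → b < β n → β (n+1) = ((n:ℝ) / (n+1)) * β n)
    (h2 : ∀ n, m0 ≤ n → β n ≤ b → β (n+1) ≤ β n + 1/((n:ℝ)+1))
    (b' : ℝ) (hb' : b < b') :
    ∀ n, ⌈1/b⌉₊ * max m0 ⌈1/(b'-b)⌉₊ ≤ n → β n ≤ b' := by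
  intro n hn
  set C : ℕ := ⌈1/b⌉₊ with hC
  set M : ℕ := max m0 ⌈1/(b'-b)⌉₊ with hM
  obtain ⟨hbpos, hb1⟩ := hb
  have hdb : (0:ℝ) < b' - b := sub_pos.mpr hb'
  have hM0 : m0 ≤ M := le_max_left _ _
  have hMpos : 0 < M := lt_of_lt_of_le hm0 hM0
  have hCreal : (1:ℝ)/b ≤ C := Nat.le_ceil _
  have hCpos : 0 < C := by
    have h : (0:ℝ) < 1/b := by positivity
    exact Nat.ceil_pos.mpr h
  have hMm1 : M ≤ C * M := Nat.le_mul_of_pos_left M hCpos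
  have hsmall : ∀ k : ℕ, M ≤ k → 1/((k:ℝ)+1) ≤ b' - b := by
    intro k hk
    have hk' : ⌈1/(b'-b)⌉₊ ≤ k := le_trans (le_max_right _ _) hk
    have h1k : (1:ℝ)/(b'-b) ≤ (k:ℝ) := le_trans (Nat.le_ceil _) (by exact_mod_cast hk')
    have hk1 : (1:ℝ)/(b'-b) ≤ (k:ℝ)+1 := by linarith
    rw [div_le_iff₀ hdb] at hk1
    rw [div_le_iff₀ (by positivity : (0:ℝ) < (k:ℝ)+1)]
    nlinarith
  have hinv : ∀ k : ℕ, M ≤ k → β k ≤ b' → β (k+1) ≤ b' := by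
    intro k hk hbk
    have hk0 : m0 ≤ k := le_trans hM0 hk
    by_cases hc : b < β k
    · rw [h1 k hk0 hc]
      have h0 : 0 ≤ β k := (hβ01 k hk0).1
      have hle : (k:ℝ)/((k:ℝ)+1) ≤ 1 :=
        div_le_one_of_le₀ (by linarith [Nat.cast_nonneg (α := ℝ) k]) (by positivity)
      nlinarith
    · push_neg at hc
      calc β (k+1) ≤ β k + 1/((k:ℝ)+1) := h2 k hk0 hc
        _ ≤ b + (b'-b) := add_le_add hc (hsmall k hk)
        _ = b' := by ring
  have hinvle : ∀ k, M ≤ k → β k ≤ b' → ∀ n, k ≤ n → β n ≤ b' := by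
    intro k hk hbk n hn
    induction n, hn using Nat.le_induction with
    | base => exact hbk
    | succ n hn ih => exact hinv n (le_trans hk hn) ih
  have hprod : ∀ n, M ≤ n → (∀ j, M ≤ j → j < n → b < β j) →
      (n:ℝ) * β n = (M:ℝ) * β M := by
    intro n hn
    induction n, hn using Nat.le_induction with
    | base => intro _; rfl
    | succ n hn ih =>
      intro hall
      have hbn := hall n hn (Nat.lt_succ_self n)
      have := ih (fun j hj hjn => hall j hj (Nat.lt_succ_of_lt hjn))
      rw [h1 n (le_trans hM0 hn) hbn]
      push_cast
      have key : ((n:ℝ)+1) * (((n:ℝ)/((n:ℝ)+1)) * β n) = (n:ℝ) * β n := by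
        field_simp
      rw [key]
      exact this
  by_cases hex : ∃ k, M ≤ k ∧ k ≤ C*M ∧ β k ≤ b
  · obtain ⟨k, hk1, hk2, hk3⟩ := hex
    exact hinvle k hk1 (le_trans hk3 (le_of_lt hb')) n (le_trans hk2 hn)
  · push_neg at hex
    exfalso
    have hall : ∀ j, M ≤ j → j < C*M → b < β j :=
      fun j hj hjn => hex j hj (le_of_lt hjn)
    have hp := hprod (C*M) hMm1 hall
    have hbm1 : b < β (C*M) := hex _ hMm1 le_rfl
    have hβM1 : β M ≤ 1 := (hβ01 M hM0).2
    have hβM0 : 0 ≤ β M := (hβ01 M hM0).1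
    have hMr : (0:ℝ) < (M:ℝ) := by exact_mod_cast hMpos
    have hCr : (0:ℝ) < (C:ℝ) := by exact_mod_cast hCpos
    have hbC : 1 ≤ (C:ℝ) * b := by rwa [div_le_iff₀ hbpos] at hCreal
    push_cast at hp
    nlinarith [mul_pos (mul_pos hCr hMr) (sub_pos.mpr hbm1),
      mul_nonneg hMr.le (sub_nonneg.mpr hβM1),
      mul_nonneg hMr.le (sub_nonneg.mpr hbC)]
end

section
/- Let $(\beta_n)_{n \ge m_0}$ be a sequence in $[0,1]$ and $\beta \in (0,1)$ such that for each $n \ge m_0$: if $\beta_n > \beta$ then $\beta_{n+1} = \frac{n}{n+1}\beta_n$, and if $\beta_n \le \beta$ then $\beta_{n+1} \le \beta_n + \frac{1}{n+1}$. If $n_1 \ge m_0$ and $\beta_{n_1} \le \beta$, then $\beta_n \le \beta + \frac{1}{n_1}$ for all $n \ge n_1$. -/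
theorem stmt1 (m0 : ℕ) (hm0 : 0 < m0) (β : ℕ → ℝ)
    (hβ01 : ∀ n, m0 ≤ n → β n ∈ Set.Icc (0:ℝ) 1)
    (b : ℝ) (hb : b ∈ Set.Ioo (0:ℝ) 1)
    (h1 : ∀ n, m0 ≤ n → b < β n → β (n+1) = ((n:ℝ) / (n+1)) * β n)
    (h2 : ∀ n, m0 ≤ n → β n ≤ b → β (n+1) ≤ β n + 1/((n:ℝ)+1))
    (n1 : ℕ) (hn1 : m0 ≤ n1) (hβn1 : β n1 ≤ b) :
    ∀ n, n1 ≤ n → β n ≤ b + 1/(n1:ℝ) := by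
  have hn1pos : (0:ℝ) < (n1:ℝ) := by
    exact_mod_cast lt_of_lt_of_le hm0 hn1
  intro n hn
  induction n, hn using Nat.le_induction with
  | base =>
    have : (0:ℝ) < 1/(n1:ℝ) := by positivity
    linarith
  | succ n hn ih =>
    have hmn : m0 ≤ n := le_trans hn1 hn
    by_cases h : b < β n
    · rw [h1 n hmn h]
      have h0 : 0 ≤ β n := (hβ01 n hmn).1
      have hfrac : ((n:ℝ)/(n+1)) ≤ 1 := by
        apply div_le_one_of_le₀ (by linarith) (by positivity)
      have := mul_le_of_le_one_left h0 hfrac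
      linarith
    · push_neg at h
      have hstep := h2 n hmn h
      have hle : (n1:ℝ) ≤ (n:ℝ) + 1 := by
        have : (n1:ℝ) ≤ (n:ℝ) := by exact_mod_cast hn
        linarith
      have : 1/((n:ℝ)+1) ≤ 1/(n1:ℝ) := by
        apply one_div_le_one_div_of_le hn1pos hle
      linarith
end

section
/- Let $a_1, \ldots, a_r \in \mathbb{R}^p$ and $\lambda_1, \ldots, \lambda_r \in (0, \infty)$ with $\sum_{j=1}^r \lambda_j = 1$. Let $\bar{a} = \sum_{j=1}^r \lambda_j a_j$ and $M = \sum_{j=1}^r \lambda_j a_j a_j^T$. Then for any generalized inverse $M^-$ of $M$ (a matrix satisfying $M M^- M = M$), one has $\bar{a}^T M^- \bar{a} \le 1$. -/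
open Matrix

theorem stmt5 (p r : ℕ) (a : Fin r → Fin p → ℝ) (l : Fin r → ℝ)
    (hl : ∀ j, 0 < l j) (hsum : ∑ j, l j = 1)
    (Minv : Matrix (Fin p) (Fin p) ℝ)
    (hg : (∑ j, l j • Matrix.vecMulVec (a j) (a j)) * Minv *
            (∑ j, l j • Matrix.vecMulVec (a j) (a j))
          = ∑ j, l j • Matrix.vecMulVec (a j) (a j)) :
    (∑ j, l j • a j) ⬝ᵥ (Minv *ᵥ (∑ j, l j • a j)) ≤ 1 := by
  set M : Matrix (Fin p) (Fin p) ℝ := ∑ j, l j • Matrix.vecMulVec (a j) (a j) with hM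
  set A : Matrix (Fin r) (Fin p) ℝ :=
    Matrix.of (fun j i => Real.sqrt (l j) * a j i) with hA
  set w : Fin r → ℝ := fun j => Real.sqrt (l j) with hw
  have hsq : ∀ j, Real.sqrt (l j) * Real.sqrt (l j) = l j := fun j =>
    Real.mul_self_sqrt (hl j).le
  -- M = Aᵀ * A
  have hMA : M = Aᵀ * A := by
    ext i k
    simp only [hM, Matrix.sum_apply, Matrix.smul_apply, Matrix.vecMulVec_apply,
      Matrix.mul_apply, Matrix.transpose_apply, hA, Matrix.of_apply, smul_eq_mul]
    exact Finset.sum_congr rfl fun j _ => by linear_combination (-(a j i * a j k)) * hsq j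
  -- ā = Aᵀ *ᵥ w
  have habar : (∑ j, l j • a j) = Aᵀ *ᵥ w := by
    funext i
    simp only [Finset.sum_apply, Pi.smul_apply, smul_eq_mul, Matrix.mulVec,
      dotProduct, Matrix.transpose_apply, hA, Matrix.of_apply, hw]
    exact Finset.sum_congr rfl fun j _ => by linear_combination (-(a j i)) * hsq j
  -- conjTranspose of A equals transpose (real entries)
  have hAH : Aᴴ = Aᵀ := by
    ext i k; simp [Matrix.conjTranspose_apply]
  -- key : Aᵀ * A * Minv * Aᵀ = Aᵀ
  have key : Aᵀ * A * Minv * Aᵀ = Aᵀ := by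
    have h0 : (Aᵀ * A * Minv - 1) * (Aᴴ * A) = 0 := by
      rw [hAH, sub_mul, one_mul, sub_eq_zero, Matrix.mul_assoc, ← Matrix.mul_assoc, ← hMA]
      exact hg
    have h1 := (Matrix.mul_conjTranspose_mul_self_eq_zero A _).mp h0
    rw [hAH] at h1
    rwa [Matrix.sub_mul, Matrix.one_mul, sub_eq_zero] at h1
  -- v := Minv *ᵥ ā satisfies M *ᵥ v = ā
  set v : Fin p → ℝ := Minv *ᵥ (∑ j, l j • a j) with hv
  have hMv : M *ᵥ v = ∑ j, l j • a j := by
    rw [hv, habar, hMA, Matrix.mulVec_mulVec, Matrix.mulVec_mulVec, key]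
  -- let q be the quantity of interest
  set q : ℝ := (∑ j, l j • a j) ⬝ᵥ v with hq
  -- q = ∑ λⱼ (aⱼ ⬝ v)
  have hq1 : q = ∑ j, l j * (a j ⬝ᵥ v) := by
    simp only [hq, dotProduct, Finset.sum_apply, Pi.smul_apply, smul_eq_mul,
      Finset.sum_mul, Finset.mul_sum]
    rw [Finset.sum_comm]
    exact Finset.sum_congr rfl fun j _ => Finset.sum_congr rfl fun i _ => by ring
  -- q = v ⬝ (M *ᵥ v) = ∑ λⱼ (aⱼ ⬝ v)²
  have hMv' : ∀ x : Fin p → ℝ, M *ᵥ x = ∑ j, (l j * (a j ⬝ᵥ x)) • a j := by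
    intro x
    funext i
    simp only [hM, Matrix.mulVec, dotProduct, Matrix.sum_apply, Matrix.smul_apply,
      Matrix.vecMulVec_apply, smul_eq_mul, Finset.sum_apply, Pi.smul_apply, Finset.sum_mul,
      Finset.mul_sum]
    rw [Finset.sum_comm]
    exact Finset.sum_congr rfl fun j _ => Finset.sum_congr rfl fun k _ => by ring
  have hdot : ∀ c : Fin r → ℝ, v ⬝ᵥ (∑ j, c j • a j) = ∑ j, c j * (a j ⬝ᵥ v) := by
    intro c
    simp only [dotProduct, Finset.sum_apply, Pi.smul_apply, smul_eq_mul, Finset.mul_sum]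
    rw [Finset.sum_comm]
    exact Finset.sum_congr rfl fun j _ => Finset.sum_congr rfl fun i _ => by ring
  have hq2 : q = ∑ j, l j * (a j ⬝ᵥ v) ^ 2 := by
    have h2 : v ⬝ᵥ (M *ᵥ v) = q := by
      rw [hMv, hq, dotProduct_comm]
    rw [← h2, hMv' v, hdot]
    exact Finset.sum_congr rfl fun j _ => by ring
  have hqnn : 0 ≤ q := by
    rw [hq2]
    exact Finset.sum_nonneg fun j _ => mul_nonneg (hl j).le (sq_nonneg _)
  -- Cauchy-Schwarz: q² ≤ q
  have hcs : q ^ 2 ≤ q := by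
    have := Finset.sum_mul_sq_le_sq_mul_sq Finset.univ
      (fun j => Real.sqrt (l j)) (fun j => Real.sqrt (l j) * (a j ⬝ᵥ v))
    have e1 : (∑ j, Real.sqrt (l j) * (Real.sqrt (l j) * (a j ⬝ᵥ v))) = q := by
      rw [hq1]
      refine Finset.sum_congr rfl fun j _ => ?_
      rw [← mul_assoc, hsq j]
    have e2 : (∑ j, Real.sqrt (l j) ^ 2) = 1 := by
      rw [← hsum]
      refine Finset.sum_congr rfl fun j _ => ?_
      rw [sq, hsq j]
    have e3 : (∑ j, (Real.sqrt (l j) * (a j ⬝ᵥ v)) ^ 2) = q := by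
      rw [hq2]
      refine Finset.sum_congr rfl fun j _ => ?_
      rw [mul_pow, sq (Real.sqrt (l j)), hsq j]
    rw [e1, e2, e3, one_mul] at this
    exact this
  nlinarith [hcs, hqnn]
end

section
/- Let $(e_i)_{i \in \mathbb{N}}$ be square-integrable random variables adapted to a filtration $(\mathcal{F}_i)_{i \ge 0}$ with $E(e_i \mid \mathcal{F}_{i-1}) = 0$ a.s. and $\sup_i E(e_i^2 \mid \mathcal{F}_{i-1}) < \infty$ a.s. Let $(Z_i)_{i \in \mathbb{N}}$ be square-integrable random variables such that $Z_i$ is $\mathcal{F}_{i-1}$-measurable for each $i$ and $\sup_i |Z_i| < \infty$ a.s. Then $\frac{1}{n}\sum_{i=1}^n Z_i e_i \to 0$ almost surely. -/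
/-!
By Kronecker's lemma it suffices that `∑ Z i * e i / i` converges almost surely. Fix `K` and
replace `Z i` by `w i = 1_{A i} * Z i / i`, where `A i` is the `ℱ (i - 1)`-measurable event
`|Z i| ≤ K ∧ E(e i ^ 2 | ℱ (i - 1)) ≤ K`. The partial sums of `w i * e i` form a martingale with
orthogonal increments, so `E (∑ w i * e i) ^ 2 = ∑ E (w i ^ 2 * E(e i ^ 2 | ℱ (i - 1))) ≤
K ^ 3 * ∑ 1 / i ^ 2`; this L²-bounded martingale converges almost surely. On the event where both
suprema are at most `K`, every `A i` occurs and the two series coincide; these events exhaust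
almost every `ω` as `K` runs through `ℕ`.
-/

open MeasureTheory Filter Topology Finset
open scoped ENNReal

theorem sum_range_add_one_eq_sum_Icc {M : Type*} [AddCommMonoid M] (f : ℕ → M) (n : ℕ) :
    ∑ i ∈ range n, f (i + 1) = ∑ i ∈ Icc 1 n, f i := by
  rw [range_eq_Ico, sum_Ico_add' f 0 n 1]
  rfl

theorem sum_Icc_eq_mul_sum_div_sub_sum_range (a : ℕ → ℝ) (n : ℕ) :
    ∑ i ∈ Icc 1 n, a i =
      n * ∑ i ∈ Icc 1 n, a i / i - ∑ k ∈ range n, ∑ i ∈ Icc 1 k, a i / i := by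
  induction n with
  | zero => simp
  | succ n ih =>
    rw [sum_Icc_succ_top (by omega), sum_Icc_succ_top (by omega), sum_range_succ, ih]
    push_cast
    field_simp
    ring

theorem tendsto_one_div_mul_sum_of_tendsto_sum_div {a : ℕ → ℝ} {c : ℝ}
    (h : Tendsto (fun n => ∑ i ∈ Icc 1 n, a i / i) atTop (𝓝 c)) :
    Tendsto (fun n : ℕ => 1 / (n : ℝ) * ∑ i ∈ Icc 1 n, a i) atTop (𝓝 0) := by
  refine (sub_self c ▸ h.sub h.cesaro).congr' ?_
  filter_upwards [eventually_ne_atTop 0] with n hn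
  rw [sum_Icc_eq_mul_sum_div_sub_sum_range a n, mul_sub, one_div,
    inv_mul_cancel_left₀ (Nat.cast_ne_zero.2 hn)]

theorem sq_mul_le_pow_three {z v K : ℝ} (hz : |z| ≤ K) (hv₀ : 0 ≤ v) (hv : v ≤ K) :
    z ^ 2 * v ≤ K ^ 3 := by
  have hz2 : z ^ 2 ≤ K ^ 2 := sq_le_sq' (abs_le.1 hz).1 (abs_le.1 hz).2
  nlinarith

section

variable {Ω : Type*} {m m₀ : MeasurableSpace Ω} {μ : Measure Ω}

theorem condExp_mul_eq_zero_of_condExp_eq_zero {f g : Ω → ℝ} (hf : StronglyMeasurable[m] f)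
    (hfg : Integrable (f * g) μ) (hg : Integrable g μ) (h : μ[g | m] =ᵐ[μ] 0) :
    μ[f * g | m] =ᵐ[μ] 0 := by
  filter_upwards [condExp_mul_of_stronglyMeasurable_left hf hfg hg, h] with ω h₁ h₂
  simp [h₁, h₂]

theorem integral_mul_eq_zero_of_condExp_eq_zero [IsFiniteMeasure μ] (hm : m ≤ m₀) {f g : Ω → ℝ}
    (hf : StronglyMeasurable[m] f) (hfg : Integrable (f * g) μ) (hg : Integrable g μ)
    (h : μ[g | m] =ᵐ[μ] 0) : ∫ ω, f ω * g ω ∂μ = 0 := by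
  calc ∫ ω, f ω * g ω ∂μ = ∫ ω, μ[f * g | m] ω ∂μ := (integral_condExp hm).symm
    _ = 0 := by
      simp [integral_congr_ae (condExp_mul_eq_zero_of_condExp_eq_zero hf hfg hg h)]

theorem integral_mul_sq_eq_integral_sq_mul_condExp_sq [IsFiniteMeasure μ] (hm : m ≤ m₀)
    {w e : Ω → ℝ} (hw : StronglyMeasurable[m] w) (hwe : MemLp (w * e) 2 μ) (he : MemLp e 2 μ) :
    ∫ ω, (w ω * e ω) ^ 2 ∂μ = ∫ ω, w ω ^ 2 * μ[e ^ 2 | m] ω ∂μ := by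
  have hpull : μ[w ^ 2 * e ^ 2 | m] =ᵐ[μ] w ^ 2 * μ[e ^ 2 | m] :=
    condExp_mul_of_stronglyMeasurable_left (hw.pow 2)
      (hwe.integrable_sq.congr (.of_forall fun ω => by simp [mul_pow])) he.integrable_sq
  simp_rw [mul_pow]
  rw [← integral_condExp hm]
  exact integral_congr_ae hpull

theorem eLpNorm_one_le_sqrt_of_integral_sq_le [IsProbabilityMeasure μ] {f : Ω → ℝ}
    (hf : MemLp f 2 μ) {C : ℝ} (hC : ∫ ω, f ω ^ 2 ∂μ ≤ C) :
    eLpNorm f 1 μ ≤ ENNReal.ofReal √C := by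
  refine (eLpNorm_le_eLpNorm_of_exponent_le one_le_two hf.aestronglyMeasurable).trans ?_
  rw [hf.eLpNorm_eq_integral_rpow_norm two_ne_zero ENNReal.ofNat_ne_top]
  simp only [ENNReal.toReal_ofNat, Real.norm_eq_abs, Real.rpow_two, sq_abs]
  rw [← one_div, ← Real.sqrt_eq_rpow]
  exact ENNReal.ofReal_le_ofReal (Real.sqrt_le_sqrt hC)

theorem summable_integral_of_ae_le [IsProbabilityMeasure μ] {f : ℕ → Ω → ℝ} {b : ℕ → ℝ}
    (hf : ∀ n, 0 ≤ᵐ[μ] f n) (hfb : ∀ n, ∀ᵐ ω ∂μ, f n ω ≤ b n) (hb : Summable b) :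
    Summable fun n => ∫ ω, f n ω ∂μ :=
  hb.of_nonneg_of_le (fun n => integral_nonneg_of_ae (hf n)) fun n => by
    simpa using integral_mono_of_nonneg (hf n) (integrable_const (b n)) (hfb n)

variable {ℱ : Filtration ℕ m₀} {d : ℕ → Ω → ℝ}

theorem stronglyAdapted_sum_range (hd : ∀ n, StronglyMeasurable[ℱ (n + 1)] (d n)) :
    StronglyAdapted ℱ fun n ω => ∑ i ∈ range n, d i ω := fun _ =>
  Finset.stronglyMeasurable_fun_sum _ fun i hi => (hd i).mono (ℱ.mono (mem_range.1 hi))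

theorem martingale_sum_range [IsFiniteMeasure μ] (hd : ∀ n, StronglyMeasurable[ℱ (n + 1)] (d n))
    (hint : ∀ n, Integrable (d n) μ) (hmds : ∀ n, μ[d n | ℱ n] =ᵐ[μ] 0) :
    Martingale (fun n ω => ∑ i ∈ range n, d i ω) ℱ μ :=
  martingale_of_condExp_sub_eq_zero_nat (stronglyAdapted_sum_range hd)
    (fun _ => integrable_finsetSum _ fun i _ => hint i) fun n => by
      simpa [sum_range_succ, Pi.sub_def] using hmds n

theorem integral_sq_sum_range [IsFiniteMeasure μ] (hd : ∀ n, StronglyMeasurable[ℱ (n + 1)] (d n))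
    (hL2 : ∀ n, MemLp (d n) 2 μ) (hmds : ∀ n, μ[d n | ℱ n] =ᵐ[μ] 0) (n : ℕ) :
    ∫ ω, (∑ i ∈ range n, d i ω) ^ 2 ∂μ = ∑ i ∈ range n, ∫ ω, d i ω ^ 2 ∂μ := by
  induction n with
  | zero => simp
  | succ n ih =>
    have hS : MemLp (fun ω => ∑ i ∈ range n, d i ω) 2 μ := memLp_finsetSum _ fun i _ => hL2 i
    have hSd : Integrable (fun ω => (∑ i ∈ range n, d i ω) * d n ω) μ := hS.integrable_mul (hL2 n)
    have horth : ∫ ω, (∑ i ∈ range n, d i ω) * d n ω ∂μ = 0 :=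
      integral_mul_eq_zero_of_condExp_eq_zero (ℱ.le n) (stronglyAdapted_sum_range hd n) hSd
        ((hL2 n).integrable one_le_two) (hmds n)
    simp_rw [sum_range_succ, add_sq, mul_assoc]
    rw [integral_add _ (hL2 n).integrable_sq, integral_add hS.integrable_sq (hSd.const_mul 2),
      integral_const_mul, horth, ih]
    · ring
    · exact hS.integrable_sq.add (hSd.const_mul 2)

theorem ae_exists_tendsto_sum_range_of_summable [IsProbabilityMeasure μ]
    (hd : ∀ n, StronglyMeasurable[ℱ (n + 1)] (d n)) (hL2 : ∀ n, MemLp (d n) 2 μ)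
    (hmds : ∀ n, μ[d n | ℱ n] =ᵐ[μ] 0) (hsum : Summable fun n => ∫ ω, d n ω ^ 2 ∂μ) :
    ∀ᵐ ω ∂μ, ∃ c, Tendsto (fun n => ∑ i ∈ range n, d i ω) atTop (𝓝 c) := by
  refine (martingale_sum_range hd (fun n => (hL2 n).integrable one_le_two)
    hmds).submartingale.exists_ae_tendsto_of_bdd
    (R := (√(∑' n, ∫ ω, d n ω ^ 2 ∂μ)).toNNReal) fun n => ?_
  refine eLpNorm_one_le_sqrt_of_integral_sq_le (memLp_finsetSum _ fun i _ => hL2 i) ?_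
  rw [integral_sq_sum_range hd hL2 hmds n]
  exact hsum.sum_le_tsum _ fun i _ => integral_nonneg fun ω => sq_nonneg _

theorem ae_exists_tendsto_sum_range_mul_of_summable [IsProbabilityMeasure μ] {w e : ℕ → Ω → ℝ}
    (hw : ∀ n, StronglyMeasurable[ℱ n] (w n)) (hw_bdd : ∀ n, MemLp (w n) ∞ μ)
    (he : ∀ n, StronglyMeasurable[ℱ (n + 1)] (e n)) (hL2 : ∀ n, MemLp (e n) 2 μ)
    (hmds : ∀ n, μ[e n | ℱ n] =ᵐ[μ] 0)
    (hsum : Summable fun n => ∫ ω, w n ω ^ 2 * μ[e n ^ 2 | ℱ n] ω ∂μ) :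
    ∀ᵐ ω ∂μ, ∃ c, Tendsto (fun n => ∑ i ∈ range n, w i ω * e i ω) atTop (𝓝 c) := by
  have hwe : ∀ n, MemLp (w n * e n) 2 μ := fun n => (hL2 n).mul (hw_bdd n)
  refine ae_exists_tendsto_sum_range_of_summable
    (fun n => ((hw n).mono (ℱ.mono n.le_succ)).mul (he n)) hwe
    (fun n => condExp_mul_eq_zero_of_condExp_eq_zero (hw n) ((hwe n).integrable one_le_two)
      ((hL2 n).integrable one_le_two) (hmds n)) ?_
  simpa only [Pi.mul_apply, integral_mul_sq_eq_integral_sq_mul_condExp_sq (ℱ.le _) (hw _) (hwe _)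
    (hL2 _)] using hsum

theorem ae_exists_tendsto_sum_range_mul_div_of_le [IsProbabilityMeasure μ] {Z e : ℕ → Ω → ℝ}
    (hZ : ∀ n, StronglyMeasurable[ℱ n] (Z n)) (he : ∀ n, StronglyMeasurable[ℱ (n + 1)] (e n))
    (hL2 : ∀ n, MemLp (e n) 2 μ) (hmds : ∀ n, μ[e n | ℱ n] =ᵐ[μ] 0) {K : ℝ} (hK : 0 ≤ K) :
    ∀ᵐ ω ∂μ, (∀ n, μ[e n ^ 2 | ℱ n] ω ≤ K) → (∀ n, |Z n ω| ≤ K) →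
      ∃ c, Tendsto (fun n => ∑ i ∈ range n, Z i ω * e i ω / (i + 1)) atTop (𝓝 c) := by
  set A : ℕ → Set Ω := fun n => {ω | |Z n ω| ≤ K ∧ μ[e n ^ 2 | ℱ n] ω ≤ K}
  set w : ℕ → Ω → ℝ := fun n ω => ((n : ℝ) + 1)⁻¹ * (A n).indicator (Z n) ω
  have hA : ∀ n, MeasurableSet[ℱ n] (A n) := fun n =>
    ((hZ n).norm.measurableSet_le stronglyMeasurable_const).inter
      ((stronglyMeasurable_condExp (f := e n ^ 2)).measurableSet_le stronglyMeasurable_const)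
  have hw : ∀ n, StronglyMeasurable[ℱ n] (w n) := fun n =>
    ((hZ n).indicator (hA n)).const_mul _
  have hind : ∀ n ω, |(A n).indicator (Z n) ω| ≤ K := by
    intro n ω
    by_cases hω : ω ∈ A n
    · simpa [hω] using hω.1
    · simpa [hω] using hK
  have hw_bdd : ∀ n, MemLp (w n) ∞ μ := fun n =>
    (memLp_top_of_bound (((hZ n).indicator (hA n)).mono (ℱ.le n)).aestronglyMeasurable K
      (.of_forall (hind n))).const_mul _
  have hV : ∀ n, 0 ≤ᵐ[μ] μ[e n ^ 2 | ℱ n] := fun n =>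
    condExp_nonneg (.of_forall fun ω => sq_nonneg (e n ω))
  have hbound : ∀ n, ∀ᵐ ω ∂μ, w n ω ^ 2 * μ[e n ^ 2 | ℱ n] ω ≤ K ^ 3 / ((n : ℝ) + 1) ^ 2 := by
    intro n
    filter_upwards [hV n] with ω hVω
    have : (A n).indicator (Z n) ω ^ 2 * μ[e n ^ 2 | ℱ n] ω ≤ K ^ 3 := by
      by_cases hω : ω ∈ A n
      · simpa [hω] using sq_mul_le_pow_three hω.1 hVω hω.2
      · simpa [hω] using pow_nonneg hK 3
    calc w n ω ^ 2 * μ[e n ^ 2 | ℱ n] ω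
        = (A n).indicator (Z n) ω ^ 2 * μ[e n ^ 2 | ℱ n] ω / ((n : ℝ) + 1) ^ 2 := by
          simp only [w]; field_simp
      _ ≤ K ^ 3 / ((n : ℝ) + 1) ^ 2 := by gcongr
  have hsum : Summable fun n => ∫ ω, w n ω ^ 2 * μ[e n ^ 2 | ℱ n] ω ∂μ := by
    refine summable_integral_of_ae_le (fun n => ?_) hbound ?_
    · filter_upwards [hV n] with ω hVω
      exact mul_nonneg (sq_nonneg _) hVω
    · simpa [div_eq_mul_inv] using ((summable_nat_add_iff 1).2
        (Real.summable_one_div_nat_pow.2 one_lt_two)).mul_left (K ^ 3)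
  filter_upwards [ae_exists_tendsto_sum_range_mul_of_summable hw hw_bdd he hL2 hmds hsum]
    with ω hω hVK hZK
  refine hω.imp fun c hc => hc.congr fun n => sum_congr rfl fun i _ => ?_
  have hωA : ω ∈ A i := ⟨hZK i, hVK i⟩
  simp only [w, Set.indicator_of_mem hωA]
  field_simp

end

theorem stmt16_general {Ω : Type*} {m : MeasurableSpace Ω} (μ : Measure Ω) [IsProbabilityMeasure μ]
    (ℱ : ℕ → MeasurableSpace Ω) (hmono : Monotone ℱ) (hle : ∀ i, ℱ i ≤ m)
    (e Z : ℕ → Ω → ℝ)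
    (hadapt : ∀ i, 1 ≤ i → StronglyMeasurable[ℱ i] (e i))
    (hL2 : ∀ i, 1 ≤ i → MemLp (e i) 2 μ)
    (hmds : ∀ i, 1 ≤ i → μ[e i | ℱ (i - 1)] =ᵐ[μ] 0)
    (hbdd : ∀ᵐ ω ∂μ, BddAbove (Set.range fun i => (μ[(e (i + 1)) ^ 2 | ℱ i]) ω))
    (hZmeas : ∀ i, 1 ≤ i → StronglyMeasurable[ℱ (i - 1)] (Z i))
    (hZbdd : ∀ᵐ ω ∂μ, BddAbove (Set.range fun i => |Z i ω|)) :
    ∀ᵐ ω ∂μ, Tendsto (fun n : ℕ => (1 / (n : ℝ)) * ∑ i ∈ Finset.Icc 1 n, Z i ω * e i ω)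
      atTop (nhds 0) := by
  have hconv := ae_all_iff.2 fun K : ℕ =>
    ae_exists_tendsto_sum_range_mul_div_of_le (ℱ := ⟨ℱ, hmono, hle⟩)
      (Z := fun n => Z (n + 1)) (e := fun n => e (n + 1))
      (fun n => by simpa using hZmeas (n + 1) n.succ_pos) (fun n => hadapt (n + 1) n.succ_pos)
      (fun n => hL2 (n + 1) n.succ_pos) (fun n => by simpa using hmds (n + 1) n.succ_pos)
      K.cast_nonneg
  filter_upwards [hbdd, hZbdd, hconv] with ω ⟨bV, hbV⟩ ⟨bZ, hbZ⟩ hω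
  obtain ⟨K, hK⟩ := exists_nat_ge (max bV bZ)
  obtain ⟨c, hc⟩ := hω K (fun n => (hbV ⟨n, rfl⟩).trans ((le_max_left _ _).trans hK))
    (fun n => (hbZ ⟨n + 1, rfl⟩).trans ((le_max_right _ _).trans hK))
  refine tendsto_one_div_mul_sum_of_tendsto_sum_div (c := c) ?_
  simp_rw [← sum_range_add_one_eq_sum_Icc (fun i => Z i ω * e i ω / i)]
  exact_mod_cast hc

theorem stmt16 {Ω : Type*} {m : MeasurableSpace Ω} (μ : Measure Ω) [IsProbabilityMeasure μ]
    (ℱ : ℕ → MeasurableSpace Ω) (hmono : Monotone ℱ) (hle : ∀ i, ℱ i ≤ m)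
    (e Z : ℕ → Ω → ℝ)
    (hadapt : ∀ i, 1 ≤ i → StronglyMeasurable[ℱ i] (e i))
    (hL2 : ∀ i, 1 ≤ i → MemLp (e i) 2 μ)
    (hmds : ∀ i, 1 ≤ i → μ[e i | ℱ (i - 1)] =ᵐ[μ] 0)
    (hbdd : ∀ᵐ ω ∂μ, BddAbove (Set.range fun i => (μ[(e (i + 1)) ^ 2 | ℱ i]) ω))
    (hZmeas : ∀ i, 1 ≤ i → StronglyMeasurable[ℱ (i - 1)] (Z i))
    (hZL2 : ∀ i, 1 ≤ i → MemLp (Z i) 2 μ)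
    (hZbdd : ∀ᵐ ω ∂μ, BddAbove (Set.range fun i => |Z i ω|)) :
    ∀ᵐ ω ∂μ, Tendsto (fun n : ℕ => (1 / (n : ℝ)) * ∑ i ∈ Finset.Icc 1 n, Z i ω * e i ω)
      atTop (nhds 0) :=
  stmt16_general μ ℱ hmono hle e Z hadapt hL2 hmds hbdd hZmeas hZbdd
end
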